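/- Let F be a field, n ≥ k > 1 integers, and X = (x_{i,j}) an n × k matrix over F. Then for any column index 1 ≤ j ≤ k, det_{n,k}(X) = Σ_{i=1}^{n} (-1)^{i+j} · x_{i,j} · det_{n-1,k-1}(X(i | j)), where X(i | j) denotes the (n-1) × (k-1) matrix obtained from X by deleting the i-th row and the j-th column. -/

import Mathlib

open Matrix Finset

/-- `sgn2 i j` is the sign of the pair `(i, j)`:
`0` if `i = j`, `1` if `i < j`, `-1` if `i > j`. -/
def sgn2 (i j : ℕ) : ℤ := if i = j then 0 else if i < j then 1 else -1

/-- The sign of a tuple `(c 0, …, c (n-1))` of natural numbers: `0` if two entries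
coincide, otherwise `(-1)` to the number of inversions. -/
def sgnTuple {n : ℕ} (c : Fin n → ℕ) : ℤ :=
  if Function.Injective c then
    (-1) ^ (Finset.univ.filter
      (fun p : Fin n × Fin n => p.1 < p.2 ∧ c p.2 < c p.1)).card
  else 0

/-- The matrix `D⁽ⁿ⁾` with `(i,j)` entry `(-1)^{i+j} ⬝ sgn(i,j)` (`1`-based indices). -/
def Dmat (F : Type*) [Field F] (n : ℕ) : Matrix (Fin n) (Fin n) F :=
  Matrix.of fun i j =>
    (-1 : F) ^ (((i : ℕ) + 1) + ((j : ℕ) + 1)) * ((sgn2 ((i : ℕ) + 1) ((j : ℕ) + 1) : ℤ) : F)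

/-- The permutations `π ∈ Π_{2m}`: (1-based) `π(1) < π(3) < ⋯ < π(2m-1)` and
`π(2l-1) < π(2l)` for all `1 ≤ l ≤ m`. -/
def IsPfPerm {m : ℕ} (π : Equiv.Perm (Fin (2 * m))) : Prop :=
  (∀ l : Fin m, π ⟨2 * l.val, by omega⟩ < π ⟨2 * l.val + 1, by omega⟩) ∧
  (∀ l l' : Fin m, l < l' → π ⟨2 * l.val, by omega⟩ < π ⟨2 * l'.val, by omega⟩)

instance {m : ℕ} : DecidablePred (@IsPfPerm m) := fun π => by
  unfold IsPfPerm; infer_instance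

/-- The Pfaffian of a `2m × 2m` matrix, defined as
`∑_{π ∈ Π_{2m}} sgn(π) ∏_{l=1}^{m} a_{π(2l-1) π(2l)}`. -/
def pfaffian {F : Type*} [Field F] (m : ℕ) (A : Matrix (Fin (2 * m)) (Fin (2 * m)) F) : F :=
  ∑ π ∈ Finset.univ.filter (fun π : Equiv.Perm (Fin (2 * m)) => IsPfPerm π),
    ((Equiv.Perm.sign π : ℤ) : F) *
      ∏ l : Fin m, A (π ⟨2 * l.val, by omega⟩) (π ⟨2 * l.val + 1, by omega⟩)

/-- The Cullis determinant of an `n × k` matrix (`n ≥ k`):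
`(-1)^{1+⋯+k} ∑_{1 ≤ c₁ < ⋯ < c_k ≤ n} (-1)^{c₁+⋯+c_k} det X[c₁,…,c_k | 1,…,k]`. -/
def cullisDet {F : Type*} [Field F] (n k : ℕ) (X : Matrix (Fin n) (Fin k) F) : F :=
  (-1 : F) ^ (∑ j ∈ Finset.range k, (j + 1)) *
    ∑ c ∈ Finset.univ.filter
        (fun c : Fin k → Fin n => ∀ i j : Fin k, i < j → c i < c j),
      (-1 : F) ^ (∑ i : Fin k, ((c i : ℕ) + 1)) * (X.submatrix c id).det

/-- The matrix `SGN(c₁,…,c_n)` with `(i,j)` entry `sgn(c_i, c_j)`, over a field. -/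
def SGNmat (F : Type*) [Field F] {n : ℕ} (c : Fin n → ℕ) : Matrix (Fin n) (Fin n) F :=
  Matrix.of fun i j => ((sgn2 (c i) (c j) : ℤ) : F)

/-- The permutation matrix `P^π` with `(i,j)` entry `1` if `j = π i` and `0` otherwise. -/
def Pmat (F : Type*) [Field F] {n : ℕ} (π : Equiv.Perm (Fin n)) : Matrix (Fin n) (Fin n) F :=
  Matrix.of fun i j => if j = π i then (1 : F) else 0

/-- The increasing enumeration of the complement of `{i, j}` in `Fin N`
(used to delete rows/columns `i` and `j`). -/
def delTwo {N M : ℕ} (i j : Fin N) : Fin M → Fin N :=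
  fun l => (Finset.sort ({i, j}ᶜ : Finset (Fin N)) (· ≤ ·)).getD (l : ℕ) i

/-- The increasing enumeration of the complement of `{i}` in `Fin N`
(used to delete row/column `i`). -/
def delOne {N M : ℕ} (i : Fin N) : Fin M → Fin N :=
  fun l => (Finset.sort ({i}ᶜ : Finset (Fin N)) (· ≤ ·)).getD (l : ℕ) i

/-- Append a final column of `1`'s to a matrix (the matrix `X'`). -/
def appendOnes {F : Type*} [Field F] {n k K : ℕ} (X : Matrix (Fin n) (Fin k) F) :
    Matrix (Fin n) (Fin K) F :=
  Matrix.of fun i j => if h : (j : ℕ) < k then X i ⟨(j : ℕ), h⟩ else 1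

/-- Append a final row of `0`'s and then a final column of `1`'s (the matrix `X''`). -/
def appendZerosOnes {F : Type*} [Field F] {n k N K : ℕ} (X : Matrix (Fin n) (Fin k) F) :
    Matrix (Fin N) (Fin K) F :=
  Matrix.of fun i j =>
    if hj : (j : ℕ) < k then
      (if hi : (i : ℕ) < n then X ⟨(i : ℕ), hi⟩ ⟨(j : ℕ), hj⟩ else 0)
    else 1

/-!
Expanding each maximal minor `det X[c | ·]` along column `j` writes `det_{n,k}(X)` as a sum over
pairs `(c, r)` of an increasing row tuple `c` and a position `r`, of `x_{c r, j}` times a minor of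
`X(c r | j)`. Deleting the entry `i = c r` from `c` and renumbering the rows past `i` is a bijection
onto pairs `(i, c')` with `c'` an increasing row tuple of `X(i | j)`; its inverse inserts `i` at
position `r = #{l | c' l < i}`. The signs agree because the renumbering shifts exactly the
`k - 1 - r` entries of `c'` lying above `i`.
-/

section InsertPos

variable {α : Type*} [LinearOrder α] {m : ℕ}

/-- The position at which `x` has to be inserted into an increasing tuple `d`. -/
def insertPos (x : α) (d : Fin m → α) : Fin (m + 1) :=
  ⟨#{l | d l < x}, Nat.lt_succ_of_le ((card_filter_le _ _).trans (card_fin m).le)⟩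

lemma castSucc_lt_insertPos_iff {x : α} {d : Fin m → α} (hd : Monotone d) (l : Fin m) :
    l.castSucc < insertPos x d ↔ d l < x :=
  Fin.lt_card_filter_univ_iff_apply_of_imp _ fun _ _ hba h => (hd hba).trans_lt h

def insertTuple (x : α) (d : Fin m → α) : Fin (m + 1) → α :=
  Fin.insertNth (insertPos x d) x d

@[simp]
lemma insertTuple_insertPos (x : α) (d : Fin m → α) : insertTuple x d (insertPos x d) = x :=
  Fin.insertNth_apply_same _ _ _

@[simp]
lemma insertTuple_succAbove_insertPos (x : α) (d : Fin m → α) (l : Fin m) :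
    insertTuple x d ((insertPos x d).succAbove l) = d l :=
  Fin.insertNth_apply_succAbove _ _ _ _

lemma insertTuple_comp_succAbove_insertPos (x : α) (d : Fin m → α) :
    insertTuple x d ∘ (insertPos x d).succAbove = d :=
  funext (insertTuple_succAbove_insertPos x d)

lemma strictMono_insertTuple {x : α} {d : Fin m → α} (hd : StrictMono d)
    (hx : x ∉ Set.range d) : StrictMono (insertTuple x d) := by
  have below (l : Fin m) (h : (insertPos x d).succAbove l < insertPos x d) : d l < x :=
    (castSucc_lt_insertPos_iff hd.monotone l).mp ((Fin.succAbove_lt_iff_castSucc_lt _ _).mp h)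
  have above (l : Fin m) (h : insertPos x d < (insertPos x d).succAbove l) : x < d l := by
    have := (castSucc_lt_insertPos_iff (x := x) hd.monotone l).not.mp
      ((Fin.lt_succAbove_iff_le_castSucc _ _).mp h).not_gt
    exact (not_lt.mp this).lt_of_ne fun hxl => hx ⟨l, hxl.symm⟩
  intro s t hst
  obtain rfl | ⟨s, rfl⟩ := Fin.eq_self_or_eq_succAbove (insertPos x d) s <;>
    obtain rfl | ⟨t, rfl⟩ := Fin.eq_self_or_eq_succAbove (insertPos x d) t <;>
    simp only [insertTuple_insertPos, insertTuple_succAbove_insertPos]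
  · exact absurd hst (lt_irrefl _)
  · exact above t hst
  · exact below s hst
  · exact hd (Fin.succAbove_lt_succAbove_iff.mp hst)

lemma insertPos_removeNth {c : Fin (m + 1) → α} (hc : StrictMono c) (r : Fin (m + 1)) :
    insertPos (c r) (Fin.removeNth r c) = r := by
  have below (l : Fin m) : Fin.removeNth r c l < c r ↔ (l : ℕ) < r :=
    hc.lt_iff_lt.trans (Fin.succAbove_lt_iff_castSucc_lt _ _)
  ext
  simp only [insertPos, below, Fin.card_filter_val_lt, min_eq_right r.is_le]

end InsertPos

section SuccAbove

variable {p m : ℕ}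

lemma delOne_eq_succAbove (i : Fin (p + 1)) : delOne (M := p) i = Fin.succAbove i := by
  funext l
  have h := DFunLike.congr_fun (orderEmbOfFin_compl_singleton_eq_succAboveOrderEmb i) l
  rw [orderEmbOfFin_apply] at h
  rw [delOne, List.getD_eq_getElem _ _ (by simp [card_compl])]
  exact h

lemma sum_val_insertTuple_succAbove (i : Fin (p + 1)) (c' : Fin m → Fin p) :
    ∑ s, ((insertTuple i (i.succAbove ∘ c') s : Fin (p + 1)) + 1 : ℕ) +
        insertPos i (i.succAbove ∘ c') = ((i : ℕ) + 1) + ∑ l, ((c' l : ℕ) + 1) + m := by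
  have shift (a : Fin p) :
      ((i.succAbove a : ℕ) + 1) + (if i.succAbove a < i then 1 else 0) = ((a : ℕ) + 1) + 1 := by
    rcases lt_or_ge a.castSucc i with h | h
    · simp [Fin.succAbove_of_castSucc_lt _ _ h, h]
    · simp [Fin.succAbove_of_le_castSucc _ _ h, h.trans Fin.castSucc_lt_succ.le]
  rw [Fin.sum_univ_succAbove _ (insertPos i (i.succAbove ∘ c'))]
  simp only [insertTuple_insertPos, insertTuple_succAbove_insertPos, Function.comp_apply]
  simp only [insertPos, card_filter, Function.comp_apply]
  rw [add_assoc, ← sum_add_distrib]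
  simp only [shift, sum_add_distrib, sum_const, card_univ, Fintype.card_fin, smul_eq_mul]
  ring

def succAboveInv (i : Fin (p + 1)) (d : Fin m → Fin (p + 1)) (hd : ∀ l, d l ≠ i) :
    Fin m → Fin p :=
  fun l => (finSuccAboveEquiv i).symm ⟨d l, hd l⟩

lemma succAbove_succAboveInv (i : Fin (p + 1)) (d : Fin m → Fin (p + 1)) (hd : ∀ l, d l ≠ i)
    (l : Fin m) : i.succAbove (succAboveInv i d hd l) = d l :=
  congrArg Subtype.val ((finSuccAboveEquiv i).apply_symm_apply ⟨d l, hd l⟩)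

lemma strictMono_succAboveInv {i : Fin (p + 1)} {d : Fin m → Fin (p + 1)} (hd : StrictMono d)
    (hdi : ∀ l, d l ≠ i) : StrictMono (succAboveInv i d hdi) := fun a b hab =>
  (Fin.strictMono_succAbove i).lt_iff_lt.mp <| by
    simpa only [succAbove_succAboveInv] using hd hab

def insertEquiv : Fin (p + 1) × {c' : Fin m → Fin p // StrictMono c'} ≃
    {c : Fin (m + 1) → Fin (p + 1) // StrictMono c} × Fin (m + 1) where
  toFun ic :=
    (⟨insertTuple ic.1 (ic.1.succAbove ∘ ic.2),
      strictMono_insertTuple ((Fin.strictMono_succAbove _).comp ic.2.2)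
        (by rintro ⟨l, hl⟩; exact Fin.succAbove_ne _ _ hl)⟩,
     insertPos ic.1 (ic.1.succAbove ∘ ic.2))
  invFun cr :=
    (cr.1.1 cr.2,
     ⟨succAboveInv (cr.1.1 cr.2) (Fin.removeNth cr.2 cr.1.1)
        (fun l => cr.1.2.injective.ne (Fin.succAbove_ne _ l)),
      strictMono_succAboveInv (cr.1.2.comp (Fin.strictMono_succAbove _)) _⟩)
  left_inv := by
    rintro ⟨i, c', hc'⟩
    refine Prod.ext (insertTuple_insertPos _ _) (Subtype.ext (funext fun l => ?_))
    refine Fin.succAbove_right_injective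
      (p := insertTuple i (i.succAbove ∘ c') (insertPos i (i.succAbove ∘ c'))) ?_
    simp [succAbove_succAboveInv, Fin.removeNth]
  right_inv := by
    rintro ⟨⟨c, hc⟩, r⟩
    have hsucc : (c r).succAbove ∘ succAboveInv (c r) (Fin.removeNth r c)
        (fun l => hc.injective.ne (Fin.succAbove_ne _ l)) = Fin.removeNth r c :=
      funext (succAbove_succAboveInv _ _ _)
    simp only [hsucc, insertTuple, insertPos_removeNth hc, Fin.insertNth_self_removeNth]

end SuccAbove

open scoped Classical in
lemma cullisDet_eq_sum_strictMono {F : Type*} [Field F] (n k : ℕ)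
    (X : Matrix (Fin n) (Fin k) F) :
    cullisDet n k X = (-1 : F) ^ (∑ j ∈ range k, (j + 1)) *
      ∑ c : {c : Fin k → Fin n // StrictMono c},
        (-1 : F) ^ (∑ i, ((c.1 i : ℕ) + 1)) * (X.submatrix c id).det := by
  rw [cullisDet, sum_subtype (p := StrictMono) _ fun c => ?_]
  simp only [mem_filter, mem_univ, true_and]
  rfl

open scoped Classical in
lemma cullisDet_succ_laplace {F : Type*} [Field F] (p m : ℕ)
    (X : Matrix (Fin (p + 1)) (Fin (m + 1)) F) (j : Fin (m + 1)) :
    cullisDet (p + 1) (m + 1) X =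
      ∑ i : Fin (p + 1), (-1 : F) ^ (((i : ℕ) + 1) + ((j : ℕ) + 1)) * X i j *
        cullisDet p m (X.submatrix i.succAbove j.succAbove) := by
  simp only [cullisDet_eq_sum_strictMono, det_succ_column _ j, submatrix_apply,
    submatrix_submatrix, Function.id_comp, Function.comp_id, id, mul_sum,
    ← Fintype.sum_prod_type']
  rw [← insertEquiv.sum_comp]
  refine Fintype.sum_congr _ _ fun ⟨i, c', _⟩ => ?_
  have hsum := sum_val_insertTuple_succAbove i c'
  simp only [insertEquiv, Equiv.coe_fn_mk, insertTuple_insertPos,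
    insertTuple_comp_succAbove_insertPos]
  have hsign : (-1 : F) ^ (∑ j ∈ range (m + 1), (j + 1)) *
        (-1) ^ (∑ s, ((insertTuple i (i.succAbove ∘ c') s : Fin (p + 1)) + 1 : ℕ)) *
        (-1) ^ ((insertPos i (i.succAbove ∘ c') : ℕ) + j) =
      (-1) ^ (((i : ℕ) + 1) + ((j : ℕ) + 1)) * (-1) ^ (∑ j ∈ range m, (j + 1)) *
        (-1) ^ (∑ l, ((c' l : ℕ) + 1)) := by
    simp only [← pow_add, sum_range_succ]
    have h2m (e : ℕ) : (-1 : F) ^ (e + 2 * m) = (-1) ^ e := by simp [pow_add, pow_mul]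
    conv_rhs => rw [← h2m]
    congr 1
    omega
  linear_combination (X i j * (X.submatrix (i.succAbove ∘ c') j.succAbove).det) * hsign

theorem cullisDet_laplace_expansion_general {F : Type*} [Field F] (n k : ℕ)
    (X : Matrix (Fin n) (Fin k) F) (j : Fin k) :
    cullisDet n k X =
      ∑ i : Fin n, (-1 : F) ^ (((i : ℕ) + 1) + ((j : ℕ) + 1)) * X i j *
        cullisDet (n - 1) (k - 1) (X.submatrix (delOne i) (delOne j)) := by
  obtain ⟨m, rfl⟩ : ∃ m, k = m + 1 := ⟨k - 1, (Nat.succ_pred_eq_of_pos j.pos).symm⟩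
  cases n with
  | zero => simp [cullisDet]
  | succ p =>
    simp only [delOne_eq_succAbove]
    exact cullisDet_succ_laplace p m X j

/-- Laplace expansion of the Cullis determinant along the `j`-th column:
for `n ≥ k > 1`, `det_{n,k}(X) = ∑_{i=1}^n (-1)^{i+j} x_{ij} det_{n-1,k-1}(X(i|j))`,
where `X(i|j)` is obtained from `X` by deleting row `i` and column `j`. -/
theorem cullisDet_laplace_expansion {F : Type*} [Field F] (n k : ℕ) (hk : 1 < k)
    (hn : k ≤ n) (X : Matrix (Fin n) (Fin k) F) (j : Fin k) :
    cullisDet n k X =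
      ∑ i : Fin n, (-1 : F) ^ (((i : ℕ) + 1) + ((j : ℕ) + 1)) * X i j *
        cullisDet (n - 1) (k - 1) (X.submatrix (delOne i) (delOne j)) :=
  cullisDet_laplace_expansion_general n k X j
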